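/- arXiv:1709.06411 — 4 statements merged into one kernel-verified Lean document; each statement's English description precedes it below -/
import Mathlib

section
/- There exist constants C ≥ 1 and c ∈ (0,1] such that for all n ≥ 2, P(for every k with 1 ≤ k ≤ 2n, |S_k| ≤ m_n / ln n) ≤ C exp(−c n^{1/3} (ln n)^{2/3}). (Tube estimate for the simple random walk.) -/
/-!
Let `L = m_n / ln n` be the half-width of the tube and cut `[0, 2n]` into `N = ⌊2n / ℓ⌋`
consecutive blocks of length `ℓ = ⌈16 L²⌉`. A path that stays in the tube has every block
increment of size at most `2L`. A block increment `W` is a sum of `ℓ` independent signs, so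
`E W² = ℓ` and `E W⁴ ≤ 3ℓ²`, and the Paley–Zygmund argument gives `P(|W| ≤ 2L) ≤ 23/24` because
`(2L)² ≤ ℓ / 4`. The block increments are independent, hence the tube has probability at most
`(23/24)^N ≤ e^{1/24} e^{-2n / (408 L²)}`, and `n / L² = (ln 2)² n^{1/3} (ln n)^{2/3}`.
-/

open MeasureTheory ProbabilityTheory Filter

lemma measurableSet_abs_sum_le {Ω ι : Type*} (X : ι → Ω → ℝ) (s : Finset ι) (c : ℝ) :
    MeasurableSet[⨆ i ∈ (s : Set ι), Real.measurableSpace.comap (X i)]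
      {ω | |∑ i ∈ s, X i ω| ≤ c} := by
  have hX : ∀ i ∈ s, Measurable[⨆ i ∈ (s : Set ι), Real.measurableSpace.comap (X i)] (X i) :=
    fun i hi ↦ .of_comap_le <|
      le_iSup₂ (f := fun i (_ : i ∈ (s : Set ι)) ↦ Real.measurableSpace.comap (X i)) i hi
  exact Finset.measurable_sum s hX (measurableSet_le measurable_abs measurable_const)

section

variable {Ω : Type*} [MeasurableSpace Ω] {P : Measure Ω}

section Rademacher

variable {Y : Ω → ℝ}

lemma ae_eq_one_or_eq_neg_one_of_measure_eq_half [IsProbabilityMeasure P] (hY : Measurable Y)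
    (h₁ : P {ω | Y ω = 1} = 1 / 2) (h₂ : P {ω | Y ω = -1} = 1 / 2) :
    ∀ᵐ ω ∂P, Y ω = 1 ∨ Y ω = -1 := by
  have hA : MeasurableSet {ω | Y ω = 1} := hY (measurableSet_singleton 1)
  have hB : MeasurableSet {ω | Y ω = -1} := hY (measurableSet_singleton (-1))
  have hdisj : Disjoint {ω | Y ω = 1} {ω | Y ω = -1} := by
    rw [Set.disjoint_left]
    rintro ω (h : Y ω = 1) (h' : Y ω = -1)
    linarith
  rw [ae_iff_measure_eq, Set.ofPred_or, measure_union hdisj hB, h₁, h₂, ENNReal.add_halves,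
    measure_univ]
  exact (hA.union hB).nullMeasurableSet

lemma integral_eq_zero_of_measure_eq_half [IsProbabilityMeasure P] (hY : Measurable Y)
    (h₁ : P {ω | Y ω = 1} = 1 / 2) (h₂ : P {ω | Y ω = -1} = 1 / 2) :
    ∫ ω, Y ω ∂P = 0 := by
  have hA : MeasurableSet {ω | Y ω = 1} := hY (measurableSet_singleton 1)
  have hB : MeasurableSet {ω | Y ω = -1} := hY (measurableSet_singleton (-1))
  have hY_eq : Y =ᵐ[P] fun ω ↦ {ω | Y ω = 1}.indicator 1 ω - {ω | Y ω = -1}.indicator 1 ω := by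
    filter_upwards [ae_eq_one_or_eq_neg_one_of_measure_eq_half hY h₁ h₂] with ω hω
    rcases hω with hω | hω <;> norm_num [Set.indicator_apply, hω]
  rw [integral_congr_ae hY_eq, integral_sub ((integrable_const 1).indicator hA)
    ((integrable_const 1).indicator hB), integral_indicator_one hA, integral_indicator_one hB,
    measureReal_def, measureReal_def, h₁, h₂, sub_self]

lemma ae_sq_eq_one_of_measure_eq_half [IsProbabilityMeasure P] (hY : Measurable Y)
    (h₁ : P {ω | Y ω = 1} = 1 / 2) (h₂ : P {ω | Y ω = -1} = 1 / 2) :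
    ∀ᵐ ω ∂P, Y ω ^ 2 = 1 := by
  filter_upwards [ae_eq_one_or_eq_neg_one_of_measure_eq_half hY h₁ h₂] with ω hω
  rcases hω with hω | hω <;> norm_num [hω]

end Rademacher

section MomentsOfSums

lemma integrable_pow_of_ae_abs_le [IsFiniteMeasure P] {W : Ω → ℝ} (hW : Measurable W) {C : ℝ}
    (hWC : ∀ᵐ ω ∂P, |W ω| ≤ C) (k : ℕ) : Integrable (fun ω ↦ W ω ^ k) P :=
  .of_bound (hW.pow_const k).aestronglyMeasurable (C ^ k) <| by
    filter_upwards [hWC] with ω hω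
    simpa only [norm_pow, Real.norm_eq_abs] using pow_le_pow_left₀ (abs_nonneg _) hω k

lemma integrable_mul_pow_of_sq_eq_one [IsFiniteMeasure P] {Y W : Ω → ℝ} (hY : Measurable Y)
    (hW : Measurable W) (hY_sq : ∀ᵐ ω ∂P, Y ω ^ 2 = 1) {C : ℝ} (hWC : ∀ᵐ ω ∂P, |W ω| ≤ C)
    (k : ℕ) : Integrable (fun ω ↦ Y ω * W ω ^ k) P :=
  (integrable_pow_of_ae_abs_le hW hWC k).bdd_mul hY.aestronglyMeasurable
    (hY_sq.mono fun _ h ↦ (sq_le_one_iff_abs_le_one _).1 h.le)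

section IndepStep

variable {Y W : Ω → ℝ} (hYW : IndepFun Y W P) (hY : Measurable Y) (hW : Measurable W)
  (hY_sq : ∀ᵐ ω ∂P, Y ω ^ 2 = 1) (hY_mean : ∫ ω, Y ω ∂P = 0) {C : ℝ}
  (hWC : ∀ᵐ ω ∂P, |W ω| ≤ C)
include hYW hY hW hY_mean

lemma ProbabilityTheory.IndepFun.integral_mul_pow_eq_zero (k : ℕ) : ∫ ω, Y ω * W ω ^ k ∂P = 0 := by
  have h := (hYW.comp measurable_id (measurable_id.pow_const k)).integral_mul_eq_mul_integral
    hY.aestronglyMeasurable (hW.pow_const k).aestronglyMeasurable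
  simpa [hY_mean] using h

variable [IsProbabilityMeasure P]
include hY_sq hWC

lemma ProbabilityTheory.IndepFun.integral_add_sq :
    ∫ ω, (Y ω + W ω) ^ 2 ∂P = 1 + ∫ ω, W ω ^ 2 ∂P := by
  have hYW1 := integrable_mul_pow_of_sq_eq_one hY hW hY_sq hWC 1
  have hW2 := integrable_pow_of_ae_abs_le hW hWC 2
  calc ∫ ω, (Y ω + W ω) ^ 2 ∂P = ∫ ω, (1 + 2 * (Y ω * W ω ^ 1) + W ω ^ 2) ∂P := by
        refine integral_congr_ae ?_
        filter_upwards [hY_sq] with ω hω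
        linear_combination hω
    _ = 1 + ∫ ω, W ω ^ 2 ∂P := by
        rw [integral_add (by fun_prop) hW2, integral_add (by fun_prop) (by fun_prop),
          integral_const_mul, hYW.integral_mul_pow_eq_zero hY hW hY_mean]
        simp

lemma ProbabilityTheory.IndepFun.integral_add_pow_four :
    ∫ ω, (Y ω + W ω) ^ 4 ∂P = 1 + 6 * ∫ ω, W ω ^ 2 ∂P + ∫ ω, W ω ^ 4 ∂P := by
  have hYW1 := integrable_mul_pow_of_sq_eq_one hY hW hY_sq hWC 1
  have hYW3 := integrable_mul_pow_of_sq_eq_one hY hW hY_sq hWC 3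
  have hW2 := integrable_pow_of_ae_abs_le hW hWC 2
  have hW4 := integrable_pow_of_ae_abs_le hW hWC 4
  calc ∫ ω, (Y ω + W ω) ^ 4 ∂P
      = ∫ ω, (1 + 4 * (Y ω * W ω ^ 1) + 6 * W ω ^ 2 + 4 * (Y ω * W ω ^ 3) + W ω ^ 4) ∂P := by
        refine integral_congr_ae ?_
        filter_upwards [hY_sq] with ω hω
        linear_combination (1 + Y ω ^ 2 + 4 * Y ω * W ω + 6 * W ω ^ 2) * hω
    _ = 1 + 6 * ∫ ω, W ω ^ 2 ∂P + ∫ ω, W ω ^ 4 ∂P := by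
        rw [integral_add (by fun_prop) hW4, integral_add (by fun_prop) (by fun_prop),
          integral_add (by fun_prop) (by fun_prop), integral_add (by fun_prop) (by fun_prop)]
        simp only [integral_const_mul, hYW.integral_mul_pow_eq_zero hY hW hY_mean]
        simp

end IndepStep

section Sums

variable {ι : Type*} {X : ι → Ω → ℝ}

lemma ae_abs_sum_le_card (hsq : ∀ i, ∀ᵐ ω ∂P, X i ω ^ 2 = 1) (s : Finset ι) :
    ∀ᵐ ω ∂P, |∑ i ∈ s, X i ω| ≤ s.card := by
  filter_upwards [(ae_ball_iff s.countable_toSet).2 fun i _ ↦ hsq i] with ω hω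
  calc |∑ i ∈ s, X i ω| ≤ ∑ i ∈ s, |X i ω| := Finset.abs_sum_le_sum_abs _ _
    _ ≤ ∑ _i ∈ s, (1 : ℝ) :=
      Finset.sum_le_sum fun i hi ↦ (sq_le_one_iff_abs_le_one _).1 (hω i hi).le
    _ = s.card := by simp

lemma ProbabilityTheory.iIndepFun.indepFun_fun_finsetSum_of_notMem (hindep : iIndepFun X P)
    (hmeas : ∀ i, Measurable (X i)) {s : Finset ι} {a : ι} (ha : a ∉ s) :
    IndepFun (X a) (fun ω ↦ ∑ i ∈ s, X i ω) P := by
  simpa only [Finset.sum_fn] using (hindep.indepFun_finsetSum_of_notMem hmeas ha).symm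

variable [IsProbabilityMeasure P] (hmeas : ∀ i, Measurable (X i)) (hindep : iIndepFun X P)
  (hsq : ∀ i, ∀ᵐ ω ∂P, X i ω ^ 2 = 1) (hmean : ∀ i, ∫ ω, X i ω ∂P = 0)
include hmeas hindep hsq hmean

lemma integral_sq_sum_eq_card (s : Finset ι) : ∫ ω, (∑ i ∈ s, X i ω) ^ 2 ∂P = s.card := by
  classical
  induction s using Finset.induction_on with
  | empty => simp
  | insert a s ha ih =>
    simp only [Finset.sum_insert ha, Finset.card_insert_of_notMem ha]
    rw [(hindep.indepFun_fun_finsetSum_of_notMem hmeas ha).integral_add_sq (hmeas a)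
      (Finset.measurable_sum s fun i _ ↦ hmeas i) (hsq a) (hmean a) (ae_abs_sum_le_card hsq s), ih]
    push_cast
    ring

lemma integral_pow_four_sum_le (s : Finset ι) :
    ∫ ω, (∑ i ∈ s, X i ω) ^ 4 ∂P ≤ 3 * (s.card : ℝ) ^ 2 := by
  classical
  induction s using Finset.induction_on with
  | empty => simp
  | insert a s ha ih =>
    simp only [Finset.sum_insert ha, Finset.card_insert_of_notMem ha]
    rw [(hindep.indepFun_fun_finsetSum_of_notMem hmeas ha).integral_add_pow_four (hmeas a)
      (Finset.measurable_sum s fun i _ ↦ hmeas i) (hsq a) (hmean a) (ae_abs_sum_le_card hsq s),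
      integral_sq_sum_eq_card hmeas hindep hsq hmean]
    push_cast
    nlinarith

end Sums

end MomentsOfSums

lemma measureReal_abs_le_le_of_moments [IsProbabilityMeasure P] {Z : Ω → ℝ} (hZ : Measurable Z)
    (hZ2 : Integrable (fun ω ↦ Z ω ^ 2) P) (hZ4 : Integrable (fun ω ↦ Z ω ^ 4) P) {v a : ℝ}
    (hv : 0 < v) (h_sq : ∫ ω, Z ω ^ 2 ∂P = v) (h_four : ∫ ω, Z ω ^ 4 ∂P ≤ 3 * v ^ 2)
    (ha : a ^ 2 ≤ v / 4) :
    P.real {ω | |Z ω| ≤ a} ≤ 23 / 24 := by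
  set B := {ω | a < |Z ω|}
  have hB : MeasurableSet B := measurableSet_lt measurable_const hZ.abs
  have h_pointwise (ω : Ω) :
      Z ω ^ 2 ≤ a ^ 2 + B.indicator (fun _ ↦ 6 * v) ω + Z ω ^ 4 / (6 * v) := by
    have : 0 ≤ Z ω ^ 4 / (6 * v) := by positivity
    by_cases hω : ω ∈ B
    · rw [Set.indicator_of_mem hω]
      by_cases hZv : Z ω ^ 2 ≤ 6 * v
      · nlinarith
      · have : Z ω ^ 2 ≤ Z ω ^ 4 / (6 * v) := by
          rw [le_div_iff₀ (by positivity)]; nlinarith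
        nlinarith
    · have : |Z ω| ≤ a := not_lt.1 hω
      rw [Set.indicator_of_notMem hω, ← sq_abs]
      nlinarith [abs_nonneg (Z ω)]
  have h_integral : v ≤ a ^ 2 + P.real B * (6 * v) + v / 2 := by
    have hind : Integrable (B.indicator fun _ ↦ 6 * v) P := (integrable_const _).indicator hB
    have hZ4' : Integrable (fun ω ↦ Z ω ^ 4 / (6 * v)) P := hZ4.div_const _
    have h := integral_mono hZ2 (by fun_prop) h_pointwise
    rw [integral_add (by fun_prop) hZ4', integral_add (by fun_prop) hind, integral_const,
      integral_indicator_const _ hB, integral_div, h_sq] at h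
    have : (∫ ω, Z ω ^ 4 ∂P) / (6 * v) ≤ v / 2 := by
      rw [div_le_iff₀ (by positivity)]; nlinarith
    simp only [probReal_univ, smul_eq_mul, one_mul] at h
    linarith
  have hBc : {ω | |Z ω| ≤ a} = Bᶜ := by ext; simp [B]
  rw [hBc, probReal_compl_eq_one_sub hB]
  nlinarith

section Blocks

variable {β : Type*} [mβ : MeasurableSpace β] {X : ℕ → Ω → β}

lemma ProbabilityTheory.iIndepFun.measure_biInter_range_eq_prod_of_blocks
    (hindep : iIndepFun X P) (hmeas : ∀ i, Measurable (X i)) (ℓ N : ℕ) {A : ℕ → Set Ω}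
    (hA : ∀ j, MeasurableSet[⨆ i ∈ Set.Ico (j * ℓ) (j * ℓ + ℓ), mβ.comap (X i)] (A j)) :
    P (⋂ j ∈ Finset.range N, A j) = ∏ j ∈ Finset.range N, P (A j) := by
  induction N with
  | zero => simp [hindep.isProbabilityMeasure.measure_univ]
  | succ N ih =>
    have h_indep := indep_iSup_of_disjoint (fun i ↦ (hmeas i).comap_le) hindep.iIndep
      (S := Set.Iio (N * ℓ)) (T := Set.Ico (N * ℓ) (N * ℓ + ℓ))
      (Set.disjoint_left.2 fun i hi hi' ↦ (not_lt.2 hi'.1) hi)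
    have h_past : MeasurableSet[⨆ i ∈ Set.Iio (N * ℓ), mβ.comap (X i)]
        (⋂ j ∈ Finset.range N, A j) := by
      refine MeasurableSet.biInter (Finset.range N).countable_toSet fun j hj ↦ ?_
      have h_le : ⨆ i ∈ Set.Ico (j * ℓ) (j * ℓ + ℓ), mβ.comap (X i) ≤
          ⨆ i ∈ Set.Iio (N * ℓ), mβ.comap (X i) := by
        refine biSup_mono fun i hi ↦ ?_
        simp only [Finset.coe_range, Set.mem_Iio, Set.mem_Ico] at hj hi ⊢
        nlinarith
      exact h_le _ (hA j)
    rw [Finset.range_add_one, Finset.set_biInter_insert, Set.inter_comm,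
      (Indep_iff _ _ P).1 h_indep _ _ h_past (hA N), ih,
      Finset.prod_insert Finset.notMem_range_self, mul_comm]

end Blocks

section Tube

variable {X : ℕ → Ω → ℝ} [IsProbabilityMeasure P] (hmeas : ∀ i, Measurable (X i))
  (hindep : iIndepFun X P) (hsq : ∀ i, ∀ᵐ ω ∂P, X i ω ^ 2 = 1) (hmean : ∀ i, ∫ ω, X i ω ∂P = 0)
include hmeas hindep hsq hmean

lemma measureReal_abs_sum_le_le {s : Finset ℕ} (hs : s.Nonempty) {a : ℝ}
    (ha : a ^ 2 ≤ s.card / 4) :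
    P.real {ω | |∑ i ∈ s, X i ω| ≤ a} ≤ 23 / 24 :=
  measureReal_abs_le_le_of_moments (Finset.measurable_sum s fun i _ ↦ hmeas i)
    (integrable_pow_of_ae_abs_le (Finset.measurable_sum s fun i _ ↦ hmeas i)
      (ae_abs_sum_le_card hsq s) 2)
    (integrable_pow_of_ae_abs_le (Finset.measurable_sum s fun i _ ↦ hmeas i)
      (ae_abs_sum_le_card hsq s) 4)
    (by exact_mod_cast hs.card_pos) (integral_sq_sum_eq_card hmeas hindep hsq hmean s)
    (integral_pow_four_sum_le hmeas hindep hsq hmean s) ha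

lemma measureReal_tube_le_pow {L : ℝ} {ℓ : ℕ} (hℓ : 0 < ℓ) (hL : 16 * L ^ 2 ≤ ℓ) (T : ℕ) :
    P.real {ω | ∀ k ≤ T, |∑ i ∈ Finset.range k, X i ω| ≤ L} ≤ (23 / 24) ^ (T / ℓ) := by
  set A : ℕ → Set Ω := fun j ↦ {ω | |∑ i ∈ Finset.Ico (j * ℓ) (j * ℓ + ℓ), X i ω| ≤ 2 * L}
  have h_sub : {ω | ∀ k ≤ T, |∑ i ∈ Finset.range k, X i ω| ≤ L} ⊆
      ⋂ j ∈ Finset.range (T / ℓ), A j := by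
    intro ω hω
    simp only [Set.mem_iInter, Finset.mem_range]
    intro j hj
    have hjT : j * ℓ + ℓ ≤ T := by
      calc j * ℓ + ℓ = (j + 1) * ℓ := by ring
        _ ≤ T / ℓ * ℓ := Nat.mul_le_mul_right ℓ hj
        _ ≤ T := Nat.div_mul_le_self T ℓ
    have := hω (j * ℓ + ℓ) hjT
    have := hω (j * ℓ) (by omega)
    simp only [A, Set.mem_ofPred_eq, Finset.sum_Ico_eq_sub _ (Nat.le_add_right _ _)]
    exact (abs_sub _ _).trans (by linarith)
  have h_block (j : ℕ) : P.real (A j) ≤ 23 / 24 := by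
    refine measureReal_abs_sum_le_le hmeas hindep hsq hmean ?_ ?_
    · simpa using hℓ
    · simp only [Nat.card_Ico, Nat.add_sub_cancel_left]
      nlinarith
  have h_indep : P (⋂ j ∈ Finset.range (T / ℓ), A j) = ∏ j ∈ Finset.range (T / ℓ), P (A j) :=
    hindep.measure_biInter_range_eq_prod_of_blocks hmeas ℓ _ fun j ↦ by
      rw [← Finset.coe_Ico]; exact measurableSet_abs_sum_le X _ _
  calc P.real {ω | ∀ k ≤ T, |∑ i ∈ Finset.range k, X i ω| ≤ L}
      ≤ P.real (⋂ j ∈ Finset.range (T / ℓ), A j) := measureReal_mono h_sub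
    _ = ∏ j ∈ Finset.range (T / ℓ), P.real (A j) := by
      simp only [measureReal_def, h_indep, ENNReal.toReal_prod]
    _ ≤ ∏ _j ∈ Finset.range (T / ℓ), (23 / 24 : ℝ) :=
      Finset.prod_le_prod (fun _ _ ↦ measureReal_nonneg) fun j _ ↦ h_block j
    _ = (23 / 24) ^ (T / ℓ) := by rw [Finset.prod_const, Finset.card_range]

lemma measureReal_tube_le_exp {L : ℝ} (hL : 1 ≤ L) (T : ℕ) :
    P.real {ω | ∀ k ≤ T, |∑ i ∈ Finset.range k, X i ω| ≤ L} ≤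
      Real.exp (1 / 24) * Real.exp (-(T / (408 * L ^ 2))) := by
  set ℓ := ⌈16 * L ^ 2⌉₊
  have hℓ_pos : 0 < ℓ := Nat.ceil_pos.2 (by positivity)
  have hℓ_le : (ℓ : ℝ) ≤ 17 * L ^ 2 := (Nat.ceil_lt_add_one (by positivity)).le.trans (by nlinarith)
  have h_blocks : (T : ℝ) / (17 * L ^ 2) - 1 ≤ (T / ℓ : ℕ) :=
    calc (T : ℝ) / (17 * L ^ 2) - 1 ≤ T / ℓ - 1 := by gcongr
      _ ≤ ⌊(T : ℝ) / ℓ⌋₊ := (Nat.sub_one_lt_floor _).le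
      _ = (T / ℓ : ℕ) := by rw [Nat.floor_div_eq_div]
  calc P.real {ω | ∀ k ≤ T, |∑ i ∈ Finset.range k, X i ω| ≤ L}
      ≤ (23 / 24) ^ (T / ℓ) :=
        measureReal_tube_le_pow hmeas hindep hsq hmean hℓ_pos (Nat.le_ceil _) T
    _ ≤ Real.exp (-(1 / 24)) ^ (T / ℓ) :=
      pow_le_pow_left₀ (by norm_num) (by linarith [Real.add_one_le_exp (-(1 / 24))]) _
    _ = Real.exp (-((T / ℓ : ℕ) / 24)) := by rw [← Real.exp_nat_mul]; ring_nf
    _ ≤ Real.exp (1 / 24 - T / (408 * L ^ 2)) := by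
      gcongr
      have : (T : ℝ) / (408 * L ^ 2) = T / (17 * L ^ 2) / 24 := by ring
      linarith
    _ = Real.exp (1 / 24) * Real.exp (-(T / (408 * L ^ 2))) := by rw [← Real.exp_add]; ring_nf

end Tube

end

lemma rpow_one_third_mul_rpow_two_thirds_pow_three {x y : ℝ} (hx : 0 ≤ x) (hy : 0 ≤ y) :
    (x ^ (1 / 3 : ℝ) * y ^ (2 / 3 : ℝ)) ^ 3 = x * y ^ 2 := by
  rw [mul_pow, ← Real.rpow_natCast, ← Real.rpow_natCast (y ^ _), ← Real.rpow_mul hx,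
    ← Real.rpow_mul hy]
  norm_num

/-- The half-width `m_n / ln n` of the tube, as a function of `x = n`. -/
noncomputable def tubeWidth (x : ℝ) : ℝ :=
  x ^ (1 / 3 : ℝ) * Real.log x ^ (2 / 3 : ℝ) / (Real.log 2 * Real.log x)

lemma one_le_tubeWidth {x : ℝ} (hx : 1 < x) : 1 ≤ tubeWidth x := by
  have hlog2 : 0 < Real.log 2 := Real.log_pos one_lt_two
  have hlogx : 0 < Real.log x := Real.log_pos hx
  rw [tubeWidth, one_le_div (by positivity),
    ← pow_le_pow_iff_left₀ (by positivity) (by positivity) three_ne_zero,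
    rpow_one_third_mul_rpow_two_thirds_pow_three (by positivity) hlogx.le]
  have h_log2 : Real.log 2 ^ 3 ≤ 1 := pow_le_one₀ hlog2.le (by linarith [Real.log_two_lt_d9])
  have h_logx : Real.log x ≤ x := (Real.log_le_sub_one_of_pos (by positivity)).trans (by linarith)
  calc (Real.log 2 * Real.log x) ^ 3 = Real.log 2 ^ 3 * (Real.log x * Real.log x ^ 2) := by ring
    _ ≤ 1 * (x * Real.log x ^ 2) := by gcongr
    _ = x * Real.log x ^ 2 := one_mul _

lemma two_mul_div_tubeWidth_sq {x : ℝ} (hx : 1 < x) :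
    2 * x / (408 * tubeWidth x ^ 2) =
      Real.log 2 ^ 2 / 204 * x ^ (1 / 3 : ℝ) * Real.log x ^ (2 / 3 : ℝ) := by
  have hlog2 : 0 < Real.log 2 := Real.log_pos one_lt_two
  have hlogx : 0 < Real.log x := Real.log_pos hx
  have hg3 := rpow_one_third_mul_rpow_two_thirds_pow_three (by positivity) hlogx.le (x := x)
  have hg : 0 < x ^ (1 / 3 : ℝ) * Real.log x ^ (2 / 3 : ℝ) := by positivity
  rw [tubeWidth, mul_assoc _ (x ^ _)]
  generalize x ^ (1 / 3 : ℝ) * Real.log x ^ (2 / 3 : ℝ) = g at hg hg3 ⊢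
  field_simp
  rw [hg3]
  ring

/-- **Tube estimate for the simple random walk**: with `m n = n^{1/3} (ln n)^{2/3} / ln 2`,
there are constants `C ≥ 1` and `c ∈ (0,1]` such that for all `n ≥ 2`,
`P(∀ k ∈ [1, 2n], |S_k| ≤ m_n / ln n) ≤ C exp(-c n^{1/3} (ln n)^{2/3})`. -/
theorem tube_estimate_random_walk
    {Ω : Type*} [MeasurableSpace Ω] (P : Measure Ω) [IsProbabilityMeasure P]
    (X : ℕ → Ω → ℝ)
    (hmeas : ∀ i, Measurable (X i))
    (hindep : iIndepFun X P)
    (hX : ∀ i, P {ω | X i ω = 1} = 1/2 ∧ P {ω | X i ω = -1} = 1/2)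
    (S : ℕ → Ω → ℝ) (hS : ∀ k ω, S k ω = ∑ i ∈ Finset.range k, X i ω)
    (m : ℕ → ℝ) (hm : ∀ n, m n = (n : ℝ) ^ ((1:ℝ)/3) * (Real.log n) ^ ((2:ℝ)/3) / Real.log 2) :
    ∃ C c : ℝ, 1 ≤ C ∧ 0 < c ∧ c ≤ 1 ∧ ∀ n : ℕ, 2 ≤ n →
      (P {ω | ∀ k : ℕ, 1 ≤ k → k ≤ 2*n → |S k ω| ≤ m n / Real.log n}).toReal ≤
        C * Real.exp (-(c * (n : ℝ) ^ ((1:ℝ)/3) * (Real.log n) ^ ((2:ℝ)/3))) := by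
  have hsq (i : ℕ) := ae_sq_eq_one_of_measure_eq_half (hmeas i) (hX i).1 (hX i).2
  have hmean (i : ℕ) := integral_eq_zero_of_measure_eq_half (hmeas i) (hX i).1 (hX i).2
  refine ⟨Real.exp (1 / 24), Real.log 2 ^ 2 / 204, Real.one_le_exp (by norm_num),
    by positivity [Real.log_pos one_lt_two], by nlinarith [Real.log_two_lt_d9, Real.log_two_gt_d9],
    fun n hn ↦ ?_⟩
  have hn : (1 : ℝ) < n := by exact_mod_cast hn
  have hL : m n / Real.log n = tubeWidth n := by rw [hm, tubeWidth, div_div]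
  have h_tube : {ω | ∀ k : ℕ, 1 ≤ k → k ≤ 2 * n → |S k ω| ≤ m n / Real.log n} ⊆
      {ω | ∀ k ≤ 2 * n, |∑ i ∈ Finset.range k, X i ω| ≤ tubeWidth n} := by
    intro ω hω k hk
    rcases Nat.eq_zero_or_pos k with rfl | hk_pos
    · simpa using (one_le_tubeWidth hn).trans' zero_le_one
    · simpa only [← hS, ← hL] using hω k hk_pos hk
  calc (P {ω | ∀ k : ℕ, 1 ≤ k → k ≤ 2 * n → |S k ω| ≤ m n / Real.log n}).toReal
      ≤ Real.exp (1 / 24) * Real.exp (-((2 * n : ℕ) / (408 * tubeWidth n ^ 2))) :=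
        (measureReal_mono h_tube).trans
          (measureReal_tube_le_exp hmeas hindep hsq hmean (one_le_tubeWidth hn) _)
    _ = Real.exp (1 / 24) * Real.exp (-(Real.log 2 ^ 2 / 204 * (n : ℝ) ^ ((1 : ℝ) / 3) *
          Real.log n ^ ((2 : ℝ) / 3))) := by
        push_cast
        rw [two_mul_div_tubeWidth_sq hn]
end

section
/- For all integers n ≥ 2 and all integers k with 1 ≤ k ≤ n − 1, one has 2^{−2n+k} · C(2n−k, n) ≤ (e / (π √(2n))) · (√(n − k/2) / √(n − k)) · exp((2n−k) ln(1 − k/(2n)) − (n−k) ln(1 − k/n)), where C(m, j) denotes the binomial coefficient. -/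
/-!
Write `C(n + c, n) = (n + c)! / (n! c!)` and factor each factorial as `m! = s_m √(2m) (m/e)^m`
with `s_m` Stirling's sequence. Since `s_m` decreases from `s_1 = e/√2` to its limit `√π`, the
ratio `s_{n+c} / (s_n s_c)` is at most `e / (√2 π)`; the remaining Stirling factors simplify
because `e^{n+c} = e^n e^c`. The theorem is this bound for `c = n - k`, multiplied by `2^{-(n+c)}`.
-/

open Real Nat

namespace Stirling

theorem stirlingSeq_le_exp_one_div_sqrt_two {n : ℕ} (hn : n ≠ 0) :
    stirlingSeq n ≤ exp 1 / √2 := by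
  obtain ⟨m, rfl⟩ := exists_eq_succ_of_ne_zero hn
  rw [← stirlingSeq_one]
  exact stirlingSeq'_antitone m.zero_le

theorem factorial_eq_stirlingSeq_mul {n : ℕ} (hn : n ≠ 0) :
    (n ! : ℝ) = stirlingSeq n * (√(2 * n : ℝ) * (n / exp 1) ^ n) := by
  rw [stirlingSeq, div_mul_cancel₀]
  positivity

theorem choose_add_le {n c : ℕ} (hn : n ≠ 0) (hc : c ≠ 0) :
    ((n + c).choose n : ℝ) ≤
      exp 1 / (2 * π) * √((n + c) / (n * c)) * ((n + c) ^ (n + c) / (n ^ n * c ^ c)) := by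
  have hnc : n + c ≠ 0 := by omega
  have hratio : stirlingSeq (n + c) / (stirlingSeq n * stirlingSeq c) ≤ exp 1 / √2 / π := by
    rw [← mul_self_sqrt pi_pos.le]
    exact div_le_div₀ (by positivity) (stirlingSeq_le_exp_one_div_sqrt_two hnc) (by positivity)
      (mul_le_mul (sqrt_pi_le_stirlingSeq hn) (sqrt_pi_le_stirlingSeq hc) (by positivity)
        ((sqrt_nonneg _).trans (sqrt_pi_le_stirlingSeq hn)))
  have hfactor : ((n + c).choose n : ℝ) = stirlingSeq (n + c) / (stirlingSeq n * stirlingSeq c) *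
      (√2 * (√((n + c) / (n * c)) / 2 * ((n + c) ^ (n + c) / (n ^ n * c ^ c)))) := by
    have hchoose : ((n + c).choose n : ℝ) = (n + c)! / (n ! * c !) := by
      rw [eq_div_iff (by positivity), ← mul_assoc, Nat.choose_symm_add]
      exact_mod_cast Nat.add_choose_mul_factorial_mul_factorial n c
    have hn' : (0 : ℝ) < n := by positivity
    rw [hchoose, factorial_eq_stirlingSeq_mul hn, factorial_eq_stirlingSeq_mul hc,
      factorial_eq_stirlingSeq_mul hnc]
    push_cast
    rw [sqrt_div (by positivity), sqrt_mul hn'.le, sqrt_mul zero_le_two, sqrt_mul zero_le_two,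
      sqrt_mul zero_le_two]
    field_simp
    rw [div_pow, div_pow, div_pow, pow_add (exp 1), sq_sqrt zero_le_two]
    field_simp
  calc ((n + c).choose n : ℝ) = _ := hfactor
    _ ≤ exp 1 / √2 / π *
        (√2 * (√((n + c) / (n * c)) / 2 * ((n + c) ^ (n + c) / (n ^ n * c ^ c)))) := by
      gcongr
    _ = _ := by field_simp

theorem inv_two_pow_mul_choose_add_le {n c : ℕ} (hn : n ≠ 0) (hc : c ≠ 0) :
    ((2 : ℝ) ^ (n + c))⁻¹ * ((n + c).choose n : ℝ) ≤
      exp 1 / (π * √(2 * n)) * (√((n + c) / 2) / √c) *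
        (((n + c) / (2 * n)) ^ (n + c) / (c / n) ^ c) := by
  have hn' : (0 : ℝ) < n := by positivity
  calc ((2 : ℝ) ^ (n + c))⁻¹ * ((n + c).choose n : ℝ)
      ≤ ((2 : ℝ) ^ (n + c))⁻¹ * (exp 1 / (2 * π) * √((n + c) / (n * c)) *
          ((n + c) ^ (n + c) / (n ^ n * c ^ c))) := by
        gcongr
        exact choose_add_le hn hc
    _ = _ := by
      rw [sqrt_div (by positivity), sqrt_div (by positivity), sqrt_mul hn'.le,
        sqrt_mul zero_le_two, div_pow, div_pow, mul_pow, pow_add]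
      field_simp
      rw [sq_sqrt zero_le_two, pow_add]
      ring

end Stirling

theorem local_time_probability_stirling_bound_general
    (n k : ℕ) (hn : 2 ≤ n) (hkn : k ≤ n - 1) :
    (2 : ℝ) ^ ((k : ℤ) - 2 * n) * (Nat.choose (2 * n - k) n : ℝ) ≤
      (Real.exp 1 / (π * Real.sqrt (2 * n))) *
        (Real.sqrt ((n : ℝ) - k / 2) / Real.sqrt ((n : ℝ) - k)) *
        Real.exp ((2 * (n : ℝ) - k) * Real.log (1 - (k : ℝ) / (2 * n)) -
          ((n : ℝ) - k) * Real.log (1 - (k : ℝ) / n)) := by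
  obtain ⟨c, hkc⟩ : ∃ c, k + c = n := ⟨n - k, by omega⟩
  have hn0 : n ≠ 0 := by omega
  have hc : c ≠ 0 := by omega
  have hk : (k : ℝ) = n - c := by rw [← hkc]; push_cast; ring
  rw [show 2 * n - k = n + c by omega,
    show (k : ℤ) - 2 * n = -((n + c : ℕ) : ℤ) by omega, zpow_neg, zpow_natCast, hk]
  have h2n : 2 * (n : ℝ) - (n - c) = (n + c : ℕ) := by push_cast; ring
  have hsqrt₁ : (n : ℝ) - (n - c) / 2 = (n + c) / 2 := by ring
  have hsqrt₂ : (n : ℝ) - (n - c) = c := by ring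
  have hlog₁ : 1 - ((n : ℝ) - c) / (2 * n) = (n + c) / (2 * n) := by field_simp; ring
  have hlog₂ : 1 - ((n : ℝ) - c) / n = c / n := by field_simp; ring
  rw [h2n, hsqrt₁, hsqrt₂, hlog₁, hlog₂, ← Real.log_pow, ← Real.log_pow, exp_sub,
    exp_log (by positivity), exp_log (by positivity)]
  exact_mod_cast Stirling.inv_two_pow_mul_choose_add_le hn0 hc

/-- For `n ≥ 2` and `1 ≤ k ≤ n-1`,
`2^{-2n+k} C(2n-k, n) ≤ (e/(π √(2n))) (√(n-k/2)/√(n-k))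
  exp((2n-k) ln(1-k/(2n)) - (n-k) ln(1-k/n))`. -/
theorem local_time_probability_stirling_bound
    (n k : ℕ) (hn : 2 ≤ n) (hk1 : 1 ≤ k) (hkn : k ≤ n - 1) :
    (2 : ℝ) ^ ((k : ℤ) - 2 * n) * (Nat.choose (2 * n - k) n : ℝ) ≤
      (Real.exp 1 / (π * Real.sqrt (2 * n))) *
        (Real.sqrt ((n : ℝ) - k / 2) / Real.sqrt ((n : ℝ) - k)) *
        Real.exp ((2 * (n : ℝ) - k) * Real.log (1 - (k : ℝ) / (2 * n)) -
          ((n : ℝ) - k) * Real.log (1 - (k : ℝ) / n)) :=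
  local_time_probability_stirling_bound_general n k hn hkn
end

section
/- For every η ∈ (0,1) there exist a constant C > 0 and N ∈ ℕ such that for all n ≥ N and all integers k with 1 ≤ k ≤ n^{1−η}, one has 2^{−2n+k} · C(2n−k, n) ≤ (C / √n) · exp(−k² / (5n)), where C(m, j) denotes the binomial coefficient. -/
/-!
Put `a_k = 2^k C(2n-k, n)`. Consecutive terms have ratio
`a_{k+1} / a_k = 2(n-k)/(2n-k) ≤ 1 - k/(2n) ≤ exp(-k/(2n))`, so `a_k ≤ a_0 exp(-k(k-1)/(4n))`
with `a_0 = C(2n, n) ≤ 4^n/√n`. Finally `k(k-1)/(4n) ≥ k²/(5n) - 1` and `e ≤ 3`.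
For `k > n` the binomial coefficient vanishes.
-/

open Real

namespace Nat

theorem centralBinom_sq_mul_le (n : ℕ) : centralBinom n ^ 2 * (2 * n + 1) ≤ 16 ^ n := by
  induction n with
  | zero => simp
  | succ n ih =>
    refine Nat.le_of_mul_le_mul_left (c := (n + 1) ^ 2) ?_ (by positivity)
    calc (n + 1) ^ 2 * (centralBinom (n + 1) ^ 2 * (2 * (n + 1) + 1))
        = 4 * (2 * n + 1) * (2 * n + 3) * (centralBinom n ^ 2 * (2 * n + 1)) := by
          rw [← mul_assoc, ← mul_pow, succ_mul_centralBinom_succ]; ring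
      _ ≤ 4 * (2 * n + 1) * (2 * n + 3) * 16 ^ n := by gcongr
      _ ≤ 16 * (n + 1) ^ 2 * 16 ^ n := Nat.mul_le_mul_right _ (by nlinarith)
      _ = (n + 1) ^ 2 * 16 ^ (n + 1) := by ring

theorem centralBinom_mul_sqrt_le (n : ℕ) : (centralBinom n : ℝ) * √n ≤ 4 ^ n := by
  have h : (centralBinom n : ℝ) ^ 2 * (2 * n + 1) ≤ 16 ^ n := by
    exact_mod_cast centralBinom_sq_mul_le n
  refine (pow_le_pow_iff_left₀ (by positivity) (by positivity) two_ne_zero).1 ?_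
  rw [mul_pow, sq_sqrt n.cast_nonneg, ← pow_mul, mul_comm n, pow_mul]
  norm_num
  nlinarith [sq_nonneg (centralBinom n : ℝ)]

theorem cast_choose_two_mul_sub_succ {n k : ℕ} (hk : k < n) :
    ((2 * n - (k + 1)).choose n : ℝ) = (2 * n - k).choose n * ((n - k) / (2 * n - k)) := by
  have h := choose_mul_succ_eq (2 * n - (k + 1)) n
  rw [show 2 * n - (k + 1) + 1 = 2 * n - k by omega,
    show 2 * n - k - n = n - k by omega] at h
  have hR : ((2 * n - (k + 1)).choose n : ℝ) * (2 * n - k) = (2 * n - k).choose n * (n - k) := by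
    have := congrArg (Nat.cast (R := ℝ)) h
    push_cast [cast_sub (show k ≤ 2 * n by omega), cast_sub hk.le] at this
    exact this
  have hpos : (0 : ℝ) < 2 * n - k := by
    have : (k : ℝ) < n := by exact_mod_cast hk
    linarith
  rw [mul_div_assoc', eq_div_iff hpos.ne']
  exact hR

end Nat

theorem two_mul_sub_div_le_exp {n k : ℝ} (hn : 0 < n) (hk : k < 2 * n) :
    2 * (n - k) / (2 * n - k) ≤ exp (-k / (2 * n)) :=
  calc 2 * (n - k) / (2 * n - k) ≤ 1 - k / (2 * n) := by
        rw [div_le_iff₀ (by linarith), sub_mul, div_mul_eq_mul_div, le_sub_iff_add_le,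
          ← le_sub_iff_add_le', div_le_iff₀ (by linarith)]
        nlinarith [sq_nonneg k]
    _ ≤ exp (-k / (2 * n)) := by linarith [add_one_le_exp (-k / (2 * n)), neg_div (2 * n) k]

theorem exp_neg_mul_sub_one_div_le {n : ℝ} (hn : 1 ≤ n) (k : ℝ) :
    exp (-(k * (k - 1)) / (4 * n)) ≤ 3 * exp (-k ^ 2 / (5 * n)) := by
  have h : -(k * (k - 1)) / (4 * n) ≤ 1 + -k ^ 2 / (5 * n) := by
    rw [div_le_iff₀ (by linarith), add_mul, div_mul_eq_mul_div, show 5 * n = 5 / 4 * (4 * n) by ring,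
      mul_div_mul_right _ _ (by linarith)]
    nlinarith [sq_nonneg (k - 5 / 2)]
  calc exp (-(k * (k - 1)) / (4 * n)) ≤ exp 1 * exp (-k ^ 2 / (5 * n)) := by
        rw [← exp_add]; exact exp_le_exp.2 h
    _ ≤ 3 * exp (-k ^ 2 / (5 * n)) := by
        gcongr; linarith [exp_one_lt_d9]

theorem choose_two_mul_sub_mul_two_pow_le (n : ℕ) {k : ℕ} (hk : k ≤ n) :
    ((2 * n - k).choose n : ℝ) * 2 ^ k ≤ n.centralBinom * exp (-(k * (k - 1)) / (4 * n)) := by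
  induction k with
  | zero => simp [Nat.centralBinom]
  | succ k ih =>
    have hkn : (k : ℝ) < n := by exact_mod_cast hk
    have hn : (0 : ℝ) < n := by linarith [k.cast_nonneg (α := ℝ)]
    calc ((2 * n - (k + 1)).choose n : ℝ) * 2 ^ (k + 1)
        = (2 * n - k).choose n * 2 ^ k * (2 * (n - k) / (2 * n - k)) := by
          rw [Nat.cast_choose_two_mul_sub_succ hk]; ring
      _ ≤ n.centralBinom * exp (-(k * (k - 1)) / (4 * n)) * exp (-k / (2 * n)) := by
          exact mul_le_mul (ih (by omega)) (two_mul_sub_div_le_exp hn (by linarith))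
            (div_nonneg (by linarith) (by linarith)) (by positivity)
      _ = n.centralBinom * exp (-((k + 1 : ℕ) * ((k + 1 : ℕ) - 1)) / (4 * n)) := by
          rw [mul_assoc, ← exp_add]; push_cast; field_simp; ring_nf

theorem two_pow_div_four_pow_mul_choose_le {n : ℕ} (hn : 1 ≤ n) (k : ℕ) :
    2 ^ k / 4 ^ n * ((2 * n - k).choose n : ℝ) ≤ 3 / √n * exp (-k ^ 2 / (5 * n)) := by
  rcases le_or_gt k n with hkn | hnk
  · have hsqrt : 0 < √(n : ℝ) := sqrt_pos.2 (by exact_mod_cast hn)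
    calc 2 ^ k / 4 ^ n * ((2 * n - k).choose n : ℝ)
        = ((2 * n - k).choose n : ℝ) * 2 ^ k / 4 ^ n := by ring
      _ ≤ n.centralBinom * exp (-(k * (k - 1)) / (4 * n)) / 4 ^ n :=
          div_le_div_of_nonneg_right (choose_two_mul_sub_mul_two_pow_le n hkn) (by positivity)
      _ = n.centralBinom * √n / 4 ^ n * exp (-(k * (k - 1)) / (4 * n)) / √n := by
          field_simp
      _ ≤ 1 * (3 * exp (-k ^ 2 / (5 * n))) / √n := by
          gcongr
          · exact (div_le_one₀ (by positivity)).2 (Nat.centralBinom_mul_sqrt_le n)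
          · exact exp_neg_mul_sub_one_div_le (by exact_mod_cast hn) k
      _ = 3 / √n * exp (-k ^ 2 / (5 * n)) := by ring
  · rw [Nat.choose_eq_zero_of_lt (by omega), Nat.cast_zero, mul_zero]
    positivity

theorem local_time_probability_gaussian_bound_general (η : ℝ) :
    ∃ C : ℝ, 0 < C ∧ ∃ N : ℕ, ∀ n : ℕ, N ≤ n → ∀ k : ℕ, 1 ≤ k →
      (k : ℝ) ≤ (n : ℝ) ^ (1 - η) →
      (2 : ℝ) ^ ((k : ℤ) - 2 * n) * (Nat.choose (2 * n - k) n : ℝ) ≤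
        (C / Real.sqrt n) * Real.exp (-(k : ℝ) ^ 2 / (5 * n)) := by
  refine ⟨3, by norm_num, 1, fun n hn k _ _ => ?_⟩
  have h : (2 : ℝ) ^ ((k : ℤ) - 2 * n) = 2 ^ k / 4 ^ n := by
    rw [zpow_sub₀ two_ne_zero, zpow_mul, zpow_natCast, zpow_natCast]
    norm_num
  rw [h]
  exact two_pow_div_four_pow_mul_choose_le hn k

/-- For every `η ∈ (0,1)` there are `C > 0` and `N` such that for all `n ≥ N` and
all integers `k` with `1 ≤ k ≤ n^{1-η}`,
`2^{-2n+k} C(2n-k, n) ≤ (C/√n) exp(-k²/(5n))`. -/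
theorem local_time_probability_gaussian_bound
    (η : ℝ) (hη0 : 0 < η) (hη1 : η < 1) :
    ∃ C : ℝ, 0 < C ∧ ∃ N : ℕ, ∀ n : ℕ, N ≤ n → ∀ k : ℕ, 1 ≤ k →
      (k : ℝ) ≤ (n : ℝ) ^ (1 - η) →
      (2 : ℝ) ^ ((k : ℤ) - 2 * n) * (Nat.choose (2 * n - k) n : ℝ) ≤
        (C / Real.sqrt n) * Real.exp (-(k : ℝ) ^ 2 / (5 * n)) :=
  local_time_probability_gaussian_bound_general η
end

section
/- Define p(t) := (2πt)^{−3/2} ∫_0^∞ u e^{−u²/(2t)} / sinh(u/2) du for t > 0 (this is the diagonal value p_{Aff(ℝ)}(t,g,g) of the heat kernel of the Brownian motion on Aff(ℝ)). Then lim_{t→∞} t^{3/2} p(t) = (2π)^{−3/2} ∫_0^∞ u / sinh(u/2) du = π² (2π)^{−3/2}. (Slow polynomial decay of the diagonal of the heat kernel on Aff(ℝ); the paper states the constant as √(π/2), which is twice π²(2π)^{−3/2}.) -/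
/-!
Expanding `1 / (2 sinh (u/2)) = ∑ₙ e^{-(n + 1/2) u}` and integrating termwise against `u` gives
`∫₀^∞ u / sinh (u/2) du = 2 ∑ₙ (n + 1/2)⁻² = 8 ∑ₙ (2n + 1)⁻² = π²`, the odd part of `ζ(2) = π²/6`.
Since `t^{3/2} p(t) = (2π)^{-3/2} ∫₀^∞ u / sinh (u/2) · e^{-u²/(2t)} du`, dominated convergence
with the integrable majorant `u / sinh (u/2)` gives the limit.
-/

open MeasureTheory Filter Real Set Topology

theorem integral_mul_exp_neg_mul_Ioi {c : ℝ} (hc : 0 < c) :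
    ∫ u in Ioi (0 : ℝ), u * exp (-(c * u)) = (c ^ 2)⁻¹ := by
  have h := integral_rpow_mul_exp_neg_mul_Ioi two_pos hc
  norm_num [Real.Gamma_two] at h
  simpa using h

theorem integrableOn_mul_exp_neg_mul_Ioi {c : ℝ} (hc : 0 < c) :
    IntegrableOn (fun u => u * exp (-(c * u))) (Ioi 0) :=
  Integrable.of_integral_ne_zero <| by rw [integral_mul_exp_neg_mul_Ioi hc]; positivity

theorem hasSum_inv_add_half_sq : HasSum (fun n : ℕ => (((n : ℝ) + 1 / 2) ^ 2)⁻¹) (π ^ 2 / 2) := by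
  set f : ℕ → ℝ := fun n => 1 / (n : ℝ) ^ 2
  have hζ : HasSum f (π ^ 2 / 6) := hasSum_zeta_two
  have heven : HasSum (fun k => f (2 * k)) (π ^ 2 / 24) := by
    rw [show π ^ 2 / 24 = 1 / 4 * (π ^ 2 / 6) by ring]
    exact (hζ.mul_left (1 / 4)).congr_fun fun k => by simp only [f]; push_cast; ring
  have hodd : Summable (fun k => f (2 * k + 1)) :=
    hζ.summable.comp_injective fun a b h => by omega
  have hsum := tsum_even_add_odd heven.summable hodd
  rw [hζ.tsum_eq, heven.tsum_eq] at hsum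
  rw [show π ^ 2 / 2 = 4 * ∑' k, f (2 * k + 1) by linarith]
  exact (hodd.hasSum.mul_left 4).congr_fun fun k => by simp only [f]; push_cast; field_simp; ring

theorem hasSum_exp_neg_add_half_mul {u : ℝ} (hu : 0 < u) :
    HasSum (fun n : ℕ => exp (-((n + 1 / 2) * u))) (2 * sinh (u / 2))⁻¹ := by
  have hq : exp (-u) < 1 := exp_lt_one_iff.mpr (neg_lt_zero.mpr hu)
  have ha : exp (-(u / 2)) < 1 := exp_lt_one_iff.mpr (by linarith)
  have hsq : exp (-u) = exp (-(u / 2)) ^ 2 := by rw [← exp_nat_mul]; ring_nf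
  have hgeom_sum : (2 * sinh (u / 2))⁻¹ = exp (-(u / 2)) * (1 - exp (-u))⁻¹ := by
    have : exp (-(u / 2)) ^ 2 < 1 := pow_lt_one₀ (exp_pos _).le ha two_ne_zero
    rw [sinh_eq, hsq, ← inv_inv (exp (u / 2)), ← exp_neg]
    field_simp
  rw [hgeom_sum]
  refine ((hasSum_geometric_of_lt_one (exp_pos _).le hq).mul_left _).congr_fun fun n => ?_
  rw [← exp_nat_mul, ← exp_add]
  ring_nf

theorem integral_div_sinh_half : ∫ u in Ioi (0 : ℝ), u / sinh (u / 2) = π ^ 2 := by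
  have hc (n : ℕ) : (0 : ℝ) < n + 1 / 2 := by positivity
  set g : ℕ → ℝ → ℝ := fun n u => u * exp (-((n + 1 / 2) * u))
  have hg_int (n : ℕ) : IntegrableOn (g n) (Ioi 0) := integrableOn_mul_exp_neg_mul_Ioi (hc n)
  have hg_integral (n : ℕ) : ∫ u in Ioi 0, g n u = (((n : ℝ) + 1 / 2) ^ 2)⁻¹ :=
    integral_mul_exp_neg_mul_Ioi (hc n)
  have hg_norm (n : ℕ) : ∫ u in Ioi 0, ‖g n u‖ = ∫ u in Ioi 0, g n u :=
    setIntegral_congr_fun measurableSet_Ioi fun u (hu : 0 < u) =>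
      Real.norm_of_nonneg (by positivity)
  have hsum := hasSum_integral_of_summable_integral_norm hg_int
    (by simpa only [hg_norm, hg_integral] using hasSum_inv_add_half_sq.summable)
  simp only [hg_integral] at hsum
  calc ∫ u in Ioi (0 : ℝ), u / sinh (u / 2)
      = ∫ u in Ioi (0 : ℝ), 2 * ∑' n, g n u :=
        setIntegral_congr_fun measurableSet_Ioi fun u (hu : 0 < u) => by
          rw [((hasSum_exp_neg_add_half_mul hu).mul_left u).tsum_eq]
          field_simp
    _ = 2 * (π ^ 2 / 2) := by rw [integral_const_mul, hsum.unique hasSum_inv_add_half_sq]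
    _ = π ^ 2 := by ring

theorem tendsto_integral_mul_exp_neg_sq_div_atTop {μ : Measure ℝ} {f : ℝ → ℝ}
    (hf : Integrable f μ) :
    Tendsto (fun t => ∫ u, f u * exp (-u ^ 2 / (2 * t)) ∂μ) atTop (𝓝 (∫ u, f u ∂μ)) := by
  refine tendsto_integral_filter_of_dominated_convergence (fun u => ‖f u‖) ?_ ?_ hf.norm ?_
  · exact .of_forall fun t => hf.aestronglyMeasurable.mul (by fun_prop)
  · filter_upwards [eventually_gt_atTop 0] with t ht
    refine .of_forall fun u => ?_
    rw [norm_mul, norm_of_nonneg (exp_pos _).le]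
    refine mul_le_of_le_one_right (norm_nonneg _) (exp_le_one_iff.mpr ?_)
    exact div_nonpos_of_nonpos_of_nonneg (neg_nonpos.mpr (sq_nonneg u)) (by positivity)
  · refine .of_forall fun u => ?_
    have hexp : Tendsto (fun t : ℝ => exp (-u ^ 2 / (2 * t))) atTop (𝓝 1) := by
      simpa [Function.comp_def] using (continuous_exp.tendsto 0).comp
        (tendsto_const_nhds.div_atTop (tendsto_id.const_mul_atTop two_pos))
    simpa using hexp.const_mul (f u)

theorem integrableOn_div_sinh_half : IntegrableOn (fun u => u / sinh (u / 2)) (Ioi 0) :=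
  Integrable.of_integral_ne_zero <| by rw [integral_div_sinh_half]; positivity

/-- **Slow polynomial decay of the diagonal heat kernel on `Aff(ℝ)`**: with
`p(t) = (2πt)^{-3/2} ∫_0^∞ u e^{-u²/(2t)} / sinh(u/2) du`, one has
`lim_{t→∞} t^{3/2} p(t) = (2π)^{-3/2} ∫_0^∞ u / sinh(u/2) du`, and this integral
equals `π²`. -/
theorem heat_kernel_diagonal_large_time_asymptotics
    (p : ℝ → ℝ)
    (hp : ∀ t : ℝ, 0 < t → p t = (2 * π * t) ^ (-(3:ℝ)/2) *
      ∫ u in Set.Ioi (0:ℝ), u * Real.exp (-u^2 / (2*t)) / Real.sinh (u/2)) :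
    Filter.Tendsto (fun t : ℝ => t ^ ((3:ℝ)/2) * p t) Filter.atTop
      (nhds ((2 * π) ^ (-(3:ℝ)/2) * ∫ u in Set.Ioi (0:ℝ), u / Real.sinh (u/2))) ∧
    (∫ u in Set.Ioi (0:ℝ), u / Real.sinh (u/2)) = π ^ 2 := by
  refine ⟨?_, integral_div_sinh_half⟩
  refine ((tendsto_integral_mul_exp_neg_sq_div_atTop integrableOn_div_sinh_half).const_mul
    ((2 * π) ^ (-(3 : ℝ) / 2))).congr' ?_
  filter_upwards [eventually_gt_atTop 0] with t ht
  have ht_cancel : t ^ ((3 : ℝ) / 2) * t ^ (-(3 : ℝ) / 2) = 1 := by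
    rw [← rpow_add ht]; norm_num
  simp_rw [hp t ht, mul_rpow (by positivity : (0 : ℝ) ≤ 2 * π) ht.le, mul_div_right_comm]
  generalize ∫ u in Ioi 0, u / sinh (u / 2) * exp (-u ^ 2 / (2 * t)) = I
  linear_combination -(2 * π) ^ (-(3 : ℝ) / 2) * I * ht_cancel
end
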